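/- Let Ω ⊂ ℝ^(2n+1−k) be open and φ : Ω → ℝ^k continuous. If there exists c > 0 such that |φ(a) − φ(b)| ≤ c·ρ_φ(a,b) for all a, b ∈ Ω, then φ is intrinsic Lipschitz: indeed |φ(a) − φ(b)| ≤ 2·(c + k²c²/4)·d_φ(a,b) for all a, b ∈ Ω. -/

import Mathlib

open scoped BigOperators
open MeasureTheory Filter Topology

noncomputable section

namespace HeisGraph

/-! ### Points of the Heisenberg group ℍⁿ, identified with ℝ^{2n+1} -/

/-- Index type for the coordinates of a point of ℍⁿ: `x`-coordinates, `y`-coordinates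
and the vertical coordinate `t`. -/
abbrev HIdxT (n : ℕ) := Sum (Fin n) (Sum (Fin n) Unit)

/-- ℍⁿ as a Euclidean space (so that the Euclidean norm is available). -/
abbrev HP (n : ℕ) := EuclideanSpace ℝ (HIdxT n)

variable {n k : ℕ}

def xPart (p : HP n) (i : Fin n) : ℝ := p (Sum.inl i)
def yPart (p : HP n) (i : Fin n) : ℝ := p (Sum.inr (Sum.inl i))
def tPart (p : HP n) : ℝ := p (Sum.inr (Sum.inr ()))

def mkH (x y : Fin n → ℝ) (t : ℝ) : HP n :=
  WithLp.toLp 2 (fun i => Sum.elim x (Sum.elim y (fun _ => t)) i)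

/-- The Heisenberg group product on ℝ^{2n+1}. -/
def hMul (p q : HP n) : HP n :=
  mkH (fun i => xPart p i + xPart q i) (fun i => yPart p i + yPart q i)
    (tPart p + tPart q + (1 / 2) * ∑ i : Fin n, (xPart p i * yPart q i - xPart q i * yPart p i))

/-- The Heisenberg group inverse: `p⁻¹ = -p`. -/
def hInv (p : HP n) : HP n := -p

/-- The intrinsic dilations of ℍⁿ. -/
def dilH (lam : ℝ) (p : HP n) : HP n :=
  mkH (fun i => lam * xPart p i) (fun i => lam * yPart p i) (lam ^ 2 * tPart p)

/-- The homogeneous norm `‖p‖_∞ = max { |(x,y)| , |t|^{1/2} }`. -/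
def normH (p : HP n) : ℝ :=
  max (Real.sqrt (∑ i, xPart p i ^ 2 + ∑ i, yPart p i ^ 2)) (Real.sqrt |tPart p|)

/-- The homogeneous distance `d_∞(p,q) = ‖q⁻¹ · p‖_∞`. -/
def dInf (p q : HP n) : ℝ := normH (hMul (hInv q) p)

/-! ### Points of 𝕄 ≅ ℝ^{2n+1-k}: coordinates (v_{k+1..n}, η_{1..k}, w_{k+1..n}, τ) -/

abbrev MIdxT (n k : ℕ) := Sum (Fin (n - k)) (Sum (Fin k) (Sum (Fin (n - k)) Unit))

abbrev MP (n k : ℕ) := EuclideanSpace ℝ (MIdxT n k)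

def vPart (a : MP n k) (j : Fin (n - k)) : ℝ := a (Sum.inl j)
def etaPart (a : MP n k) (i : Fin k) : ℝ := a (Sum.inr (Sum.inl i))
def wPart (a : MP n k) (j : Fin (n - k)) : ℝ := a (Sum.inr (Sum.inr (Sum.inl j)))
def tauPart (a : MP n k) : ℝ := a (Sum.inr (Sum.inr (Sum.inr ())))

def mkM (v : Fin (n - k) → ℝ) (η : Fin k → ℝ) (w : Fin (n - k) → ℝ) (τ : ℝ) : MP n k :=
  WithLp.toLp 2 (fun i => Sum.elim v (Sum.elim η (Sum.elim w (fun _ => τ))) i)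

/-- The embedding `i : ℝ^{2n+1-k} → ℍⁿ` onto the subgroup 𝕄 (`k` zeros among the
`x`-coordinates first). -/
def iota (a : MP n k) : HP n :=
  mkH (fun i => if h : (i : ℕ) < k then 0 else vPart a ⟨(i : ℕ) - k, by have := i.isLt; omega⟩)
    (fun i => if h : (i : ℕ) < k then etaPart a ⟨(i : ℕ), h⟩
      else wPart a ⟨(i : ℕ) - k, by have := i.isLt; omega⟩)
    (tauPart a)

/-- The embedding `j : ℝ^k → ℍⁿ` onto the horizontal subgroup ℍ. -/
def jmap (h : EuclideanSpace ℝ (Fin k)) : HP n :=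
  mkH (fun i => if hi : (i : ℕ) < k then h ⟨(i : ℕ), hi⟩ else 0) (fun _ => 0) 0

/-- The projection `π_𝕄 : ℍⁿ → 𝕄` determined by the unique factorization `p = m·h`,
`m ∈ 𝕄`, `h ∈ ℍ` (written in the coordinates of `MP n k`). -/
def piM (hk : k ≤ n) (p : HP n) : MP n k :=
  mkM (fun j => xPart p ⟨(j : ℕ) + k, by have := j.isLt; omega⟩)
    (fun i => yPart p ⟨(i : ℕ), lt_of_lt_of_le i.isLt hk⟩)
    (fun j => yPart p ⟨(j : ℕ) + k, by have := j.isLt; omega⟩)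
    (tPart p + (1 / 2) * ∑ i : Fin k,
      xPart p ⟨(i : ℕ), lt_of_lt_of_le i.isLt hk⟩ * yPart p ⟨(i : ℕ), lt_of_lt_of_le i.isLt hk⟩)

/-- The unit vertical vector of `MP n k`. -/
def tauUnit : MP n k := mkM 0 0 0 1

/-- The product `⋆` induced on ℝ^{2n+1-k} by the group structure of 𝕄. -/
def starMul (a b : MP n k) : MP n k :=
  a + b + ((1 / 2) * ∑ j : Fin (n - k), (vPart a j * wPart b j - vPart b j * wPart a j)) • tauUnit

/-- The dilations `δ_λ^⋆` induced on ℝ^{2n+1-k}. -/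
def dilStar (lam : ℝ) (a : MP n k) : MP n k :=
  mkM (fun j => lam * vPart a j) (fun i => lam * etaPart a i) (fun j => lam * wPart a j)
    (lam ^ 2 * tauPart a)

/-- The homogeneous norm of 𝕄 read on `MP n k` (it equals `normH (iota a)`). -/
def normM (a : MP n k) : ℝ :=
  max (Real.sqrt (∑ j, vPart a j ^ 2 + ∑ i, etaPart a i ^ 2 + ∑ j, wPart a j ^ 2))
    (Real.sqrt |tauPart a|)

/-- The graph map `Φ(a) = i(a) · j(φ(a))`. -/
def graphMap (φ : MP n k → EuclideanSpace ℝ (Fin k)) (a : MP n k) : HP n :=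
  hMul (iota a) (jmap (φ a))

/-- The graph distance `d_φ(a,b) = ‖π_𝕄(Φ(b)⁻¹ · Φ(a))‖_∞`. -/
def dPhi (hk : k ≤ n) (φ : MP n k → EuclideanSpace ℝ (Fin k)) (a b : MP n k) : ℝ :=
  normM (piM hk (hMul (hInv (graphMap φ b)) (graphMap φ a)))

/-- `L : ℝ^{2n+1-k} → ℝ^k` is ⋆-linear: a homomorphism for `⋆`, homogeneous of degree 1
for the dilations `δ_λ^⋆`. -/
def IsStarLinear (L : MP n k → EuclideanSpace ℝ (Fin k)) : Prop :=
  (∀ a b, L (starMul a b) = L a + L b) ∧ ∀ lam > (0 : ℝ), ∀ a, L (dilStar lam a) = lam • L a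

/-! ### Horizontal coordinates, matrices, cubes -/

/-- Index type for the `2n-k` horizontal coordinates of `MP n k` (τ deleted). -/
abbrev HorIdx (n k : ℕ) := Sum (Fin (n - k)) (Sum (Fin k) (Fin (n - k)))

/-- The projection `π` deleting the vertical coordinate τ. -/
def piHor (a : MP n k) : HorIdx n k → ℝ :=
  Sum.elim (fun j => vPart a j) (Sum.elim (fun i => etaPart a i) (fun j => wPart a j))

/-- The ⋆-linear map associated to a `k × (2n-k)` matrix: `L(a) = M · π(a)`. -/
def ofMatrix (M : Matrix (Fin k) (HorIdx n k) ℝ) (a : MP n k) : EuclideanSpace ℝ (Fin k) :=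
  WithLp.toLp 2 (fun i => M.mulVec (piHor a) i)

/-- The open coordinate cube `I_r(a)`. -/
def cube (r : ℝ) (a : MP n k) : Set (MP n k) := {p | ∀ i, |p i - a i| < r}

/-- The closed coordinate cube `cl(I_r(a))`. -/
def closedCube (r : ℝ) (a : MP n k) : Set (MP n k) := {p | ∀ i, |p i - a i| ≤ r}

/-! ### Intrinsic differentiability -/

/-- The quantitative condition expressing uniform intrinsic differentiability of `φ`
at `a₀` (relative to `Ω`) with intrinsic differential `L`:
`lim_{r→0} sup_{a,b ∈ I_r(a₀)∩Ω} |φ(b) - φ(a) - L(a⁻¹ ⋆ b)| / d_φ(b,a) = 0`. -/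
def UIDcond (hk : k ≤ n) (Ω : Set (MP n k)) (φ : MP n k → EuclideanSpace ℝ (Fin k))
    (a₀ : MP n k) (L : MP n k → EuclideanSpace ℝ (Fin k)) : Prop :=
  ∀ ε > (0 : ℝ), ∃ r > (0 : ℝ), ∀ a ∈ cube r a₀ ∩ Ω, ∀ b ∈ cube r a₀ ∩ Ω,
    ‖φ b - φ a - L (starMul (-a) b)‖ ≤ ε * dPhi hk φ b a

/-- `φ` is uniformly intrinsic differentiable at `a₀`. -/
def UIDAt (hk : k ≤ n) (Ω : Set (MP n k)) (φ : MP n k → EuclideanSpace ℝ (Fin k))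
    (a₀ : MP n k) : Prop :=
  ∃ L, IsStarLinear L ∧ UIDcond hk Ω φ a₀ L

/-- `φ` is uniformly intrinsic differentiable at `a₀` with intrinsic Jacobian matrix `M`. -/
def UIDAtWith (hk : k ≤ n) (Ω : Set (MP n k)) (φ : MP n k → EuclideanSpace ℝ (Fin k))
    (a₀ : MP n k) (M : Matrix (Fin k) (HorIdx n k) ℝ) : Prop :=
  UIDcond hk Ω φ a₀ (ofMatrix M)

/-- The condition expressing intrinsic differentiability of `φ` at `a₀` with intrinsic
differential `L`: `lim_{a→a₀} |φ(a) - φ(a₀) - L(a₀⁻¹ ⋆ a)| / d_φ(a,a₀) = 0`. -/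
def IDcond (hk : k ≤ n) (Ω : Set (MP n k)) (φ : MP n k → EuclideanSpace ℝ (Fin k))
    (a₀ : MP n k) (L : MP n k → EuclideanSpace ℝ (Fin k)) : Prop :=
  ∀ ε > (0 : ℝ), ∃ δ > (0 : ℝ), ∀ a ∈ Ω, ‖a - a₀‖ < δ →
    ‖φ a - φ a₀ - L (starMul (-a₀) a)‖ ≤ ε * dPhi hk φ a a₀

/-- `φ` is intrinsic differentiable at `a₀`. -/
def IDAt (hk : k ≤ n) (Ω : Set (MP n k)) (φ : MP n k → EuclideanSpace ℝ (Fin k))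
    (a₀ : MP n k) : Prop :=
  ∃ L, IsStarLinear L ∧ IDcond hk Ω φ a₀ L

/-- `φ` is intrinsic differentiable at `a₀` with intrinsic Jacobian matrix `M`. -/
def IDAtWith (hk : k ≤ n) (Ω : Set (MP n k)) (φ : MP n k → EuclideanSpace ℝ (Fin k))
    (a₀ : MP n k) (M : Matrix (Fin k) (HorIdx n k) ℝ) : Prop :=
  IDcond hk Ω φ a₀ (ofMatrix M)

/-! ### The vector fields `W_j^φ` -/

/-- The `2n-k` vector fields `W^φ` on `MP n k`:
`W_j^φ = ∂_{v_j} - (1/2) w_j ∂_τ`, `∇^{φ_i} = ∂_{η_i} + φ_i ∂_τ`,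
`W^φ = ∂_{w_j} + (1/2) v_j ∂_τ`. -/
def Wfield (φ : MP n k → EuclideanSpace ℝ (Fin k)) (ℓ : HorIdx n k) (p : MP n k) : MP n k :=
  match ℓ with
  | Sum.inl j => mkM (Pi.single j 1) 0 0 (-(1 / 2) * wPart p j)
  | Sum.inr (Sum.inl i) => mkM 0 (Pi.single i 1) 0 (φ p i)
  | Sum.inr (Sum.inr j) => mkM 0 0 (Pi.single j 1) ((1 / 2) * vPart p j)

/-- For `ψ` of class C¹ (Euclidean sense), the intrinsic Jacobian matrix
`J^ψψ(m) = [(W_ℓ^ψ ψ_i)(m)]_{i,ℓ}`. -/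
def JC1 (ψ : MP n k → EuclideanSpace ℝ (Fin k)) (m : MP n k) :
    Matrix (Fin k) (HorIdx n k) ℝ :=
  Matrix.of fun i ℓ => fderiv ℝ ψ m (Wfield ψ ℓ m) i

/-- `φ` has `∂^{φ_ℓ}`-derivative `D` at `a`: along every integral curve of `W_ℓ^φ`
through `a` the difference quotients of `φ` converge to `D`. -/
def HasWDerivAt (Ω : Set (MP n k)) (φ : MP n k → EuclideanSpace ℝ (Fin k)) (ℓ : HorIdx n k)
    (a : MP n k) (D : EuclideanSpace ℝ (Fin k)) : Prop :=
  ∀ δ > (0 : ℝ), ∀ γ : ℝ → MP n k, γ 0 = a →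
    (∀ s ∈ Set.Ioo (-δ) δ, γ s ∈ Ω) →
    (∀ s ∈ Set.Ioo (-δ) δ, HasDerivAt γ (Wfield φ ℓ (γ s)) s) →
    Tendsto (fun s : ℝ => s⁻¹ • (φ (γ s) - φ a)) (𝓝[≠] (0 : ℝ)) (𝓝 D)

/-- The little-½-Hölder condition on `Ω`. -/
def LittleHolder (Ω : Set (MP n k)) (φ : MP n k → EuclideanSpace ℝ (Fin k)) : Prop :=
  ∀ Ω' : Set (MP n k), IsOpen Ω' → IsCompact (closure Ω') → closure Ω' ⊆ Ω →
    ∀ ε > (0 : ℝ), ∃ r > (0 : ℝ), ∀ a ∈ Ω', ∀ b ∈ Ω', a ≠ b → ‖a - b‖ ≤ r →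
      ‖φ a - φ b‖ ≤ ε * Real.sqrt ‖a - b‖

/-! ### `C¹_ℍ` functions on ℍⁿ -/

/-- The horizontal vector fields `X_i`, `Y_i` of ℍⁿ. -/
def Zfield (i : Sum (Fin n) (Fin n)) (p : HP n) : HP n :=
  match i with
  | Sum.inl i => mkH (Pi.single i 1) 0 (-(1 / 2) * yPart p i)
  | Sum.inr i => mkH 0 (Pi.single i 1) ((1 / 2) * xPart p i)

/-- `f : U → ℝ^k` is of class `C¹_ℍ` with horizontal derivatives `Df`: `f` is continuous
on `U`, the `Df p i` are continuous on `U` and represent the distributional derivatives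
of `f` along the horizontal vector fields. -/
def C1H (U : Set (HP n)) (f : HP n → EuclideanSpace ℝ (Fin k))
    (Df : HP n → Sum (Fin n) (Fin n) → EuclideanSpace ℝ (Fin k)) : Prop :=
  ContinuousOn f U ∧ (∀ i, ContinuousOn (fun p => Df p i) U) ∧
    ∀ (i : Sum (Fin n) (Fin n)) (j : Fin k) (ψ : HP n → ℝ),
      ContDiff ℝ (⊤ : ℕ∞) ψ → HasCompactSupport ψ → tsupport ψ ⊆ U →
      (∫ p in U, f p j * fderiv ℝ ψ p (Zfield i p)) = -∫ p in U, Df p i j * ψ p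

/-! ### The quasi-distance ρ_φ -/

/-- The function `ρ_φ(a,b)`. -/
def rhoPhi (φ : MP n k → EuclideanSpace ℝ (Fin k)) (a b : MP n k) : ℝ :=
  max
    (Real.sqrt (∑ j, (vPart a j - vPart b j) ^ 2 + ∑ i, (etaPart a i - etaPart b i) ^ 2 +
      ∑ j, (wPart a j - wPart b j) ^ 2))
    (Real.sqrt |tauPart a - tauPart b +
      (1 / 2) * ∑ i, (φ a i + φ b i) * (etaPart b i - etaPart a i) +
      (1 / 2) * ∑ j, (vPart a j * wPart b j - vPart b j * wPart a j)|)

/-! ### Families of exponential maps -/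

/-- A family of exponential maps for `φ` near `a`, as in Definition 4.2 of the paper. -/
structure ExpFamily (Ω : Set (MP n k)) (φ : MP n k → EuclideanSpace ℝ (Fin k))
    (a : MP n k) where
  δ₁ : ℝ
  δ₂ : ℝ
  pos : 0 < δ₂
  lt : δ₂ < δ₁
  sub : closedCube δ₁ a ⊆ Ω
  E : HorIdx n k → ℝ → MP n k → MP n k
  ω : HorIdx n k → MP n k → EuclideanSpace ℝ (Fin k)
  maps : ∀ ℓ, ∀ s ∈ Set.Icc (-δ₂) δ₂, ∀ b ∈ closedCube δ₂ a, E ℓ s b ∈ closedCube δ₁ a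
  start : ∀ ℓ, ∀ b ∈ closedCube δ₂ a, E ℓ 0 b = b
  isIntegral : ∀ ℓ, ∀ b ∈ closedCube δ₂ a, ∀ s ∈ Set.Icc (-δ₂) δ₂,
    HasDerivAt (fun r => E ℓ r b) (Wfield φ ℓ (E ℓ s b)) s
  contOmega : ∀ ℓ (i : Fin k), ContinuousOn (fun b => ω ℓ b i) Ω
  chain : ∀ ℓ, ∀ b ∈ closedCube δ₂ a, ∀ s ∈ Set.Icc (-δ₂) δ₂, ∀ i : Fin k,
    φ (E ℓ s b) i - φ b i = ∫ r in (0 : ℝ)..s, ω ℓ (E ℓ r b) i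

/-!
The distances `d_φ(a,b)` and `ρ_φ(a,b)` share the horizontal part `|ξ|`, and their vertical
parts differ by `½⟨φ(a) - φ(b), η' - η⟩`, which Cauchy–Schwarz bounds by
`½ |φ(a) - φ(b)| d_φ(a,b)`. Hence `ρ_φ² ≤ d_φ² + ½ |φ(a) - φ(b)| d_φ`, and the hypothesis becomes
a quadratic inequality in `|φ(a) - φ(b)|` whose solution is `|φ(a) - φ(b)| ≤ (c + c²/2) d_φ(a,b)`.
-/

lemma sum_fin_split {M : Type*} [AddCommMonoid M] (hk : k ≤ n) (f : Fin n → M) :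
    ∑ i, f i = ∑ i : Fin k, f ⟨i, by omega⟩ + ∑ j : Fin (n - k), f ⟨j + k, by omega⟩ := by
  rw [← Fin.sum_congr' f (Nat.add_sub_of_le hk), Fin.sum_univ_add]
  congr 1
  exact Finset.sum_congr rfl fun j _ => congrArg f (Fin.ext (by simp; omega))

lemma xPart_hMul (p q : HP n) (i : Fin n) : xPart (hMul p q) i = xPart p i + xPart q i := rfl
lemma yPart_hMul (p q : HP n) (i : Fin n) : yPart (hMul p q) i = yPart p i + yPart q i := rfl
lemma tPart_hMul (p q : HP n) : tPart (hMul p q) =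
    tPart p + tPart q + (1 / 2) * ∑ i, (xPart p i * yPart q i - xPart q i * yPart p i) := rfl

@[simp] lemma xPart_hInv (p : HP n) (i : Fin n) : xPart (hInv p) i = -xPart p i := rfl
@[simp] lemma yPart_hInv (p : HP n) (i : Fin n) : yPart (hInv p) i = -yPart p i := rfl
lemma tPart_hInv (p : HP n) : tPart (hInv p) = -tPart p := rfl

section graphMap

variable (φ : MP n k → EuclideanSpace ℝ (Fin k)) (a : MP n k)

@[simp] lemma xPart_graphMap_of_lt (i : Fin k) (h : (i : ℕ) < n) :
    xPart (graphMap φ a) ⟨i, h⟩ = φ a i := by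
  simp [graphMap, hMul, iota, jmap, mkH, xPart]

@[simp] lemma yPart_graphMap_of_lt (i : Fin k) (h : (i : ℕ) < n) :
    yPart (graphMap φ a) ⟨i, h⟩ = etaPart a i := by
  simp [graphMap, hMul, iota, jmap, mkH, yPart]

@[simp] lemma xPart_graphMap_add (j : Fin (n - k)) (h : (j : ℕ) + k < n) :
    xPart (graphMap φ a) ⟨j + k, h⟩ = vPart a j := by
  simp [graphMap, hMul, iota, jmap, mkH, xPart]

@[simp] lemma yPart_graphMap_add (j : Fin (n - k)) (h : (j : ℕ) + k < n) :
    yPart (graphMap φ a) ⟨j + k, h⟩ = wPart a j := by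
  simp [graphMap, hMul, iota, jmap, mkH, yPart]

lemma tPart_graphMap (hk : k ≤ n) :
    tPart (graphMap φ a) = tauPart a - (1 / 2) * ∑ i, φ a i * etaPart a i := by
  rw [graphMap, tPart_hMul, sum_fin_split hk]
  simp [iota, jmap, mkH, xPart, yPart, tPart]
  ring

end graphMap

def horDist (a b : MP n k) : ℝ :=
  Real.sqrt (∑ j, (vPart a j - vPart b j) ^ 2 + ∑ i, (etaPart a i - etaPart b i) ^ 2 +
    ∑ j, (wPart a j - wPart b j) ^ 2)

def graphVert (φ : MP n k → EuclideanSpace ℝ (Fin k)) (a b : MP n k) : ℝ :=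
  tauPart a - tauPart b + ∑ i, φ b i * (etaPart b i - etaPart a i) +
    (1 / 2) * ∑ j, (vPart a j * wPart b j - vPart b j * wPart a j)

section piM

variable (hk : k ≤ n) (q : HP n)

@[simp] lemma vPart_piM (j : Fin (n - k)) : vPart (piM hk q) j = xPart q ⟨j + k, by omega⟩ := rfl
@[simp] lemma etaPart_piM (i : Fin k) : etaPart (piM hk q) i = yPart q ⟨i, by omega⟩ := rfl
@[simp] lemma wPart_piM (j : Fin (n - k)) : wPart (piM hk q) j = yPart q ⟨j + k, by omega⟩ := rfl

lemma tauPart_piM : tauPart (piM hk q) =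
    tPart q + (1 / 2) * ∑ i : Fin k, xPart q ⟨i, by omega⟩ * yPart q ⟨i, by omega⟩ := rfl

end piM

section graphQuot

variable (hk : k ≤ n) (φ : MP n k → EuclideanSpace ℝ (Fin k)) (a b : MP n k)

lemma tauPart_piM_graphQuot :
    tauPart (piM hk (hMul (hInv (graphMap φ b)) (graphMap φ a))) = graphVert φ a b := by
  rw [tauPart_piM, tPart_hMul, tPart_hInv, sum_fin_split hk, tPart_graphMap φ a hk,
    tPart_graphMap φ b hk]
  simp only [xPart_hMul, yPart_hMul, xPart_hInv, yPart_hInv, xPart_graphMap_of_lt,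
    yPart_graphMap_of_lt, xPart_graphMap_add, yPart_graphMap_add, graphVert]
  simp only [mul_sub, add_mul, mul_add, neg_mul, mul_neg, Finset.sum_add_distrib,
    Finset.sum_sub_distrib, Finset.sum_neg_distrib]
  ring

lemma dPhi_eq : dPhi hk φ a b = max (horDist a b) (Real.sqrt |graphVert φ a b|) := by
  rw [dPhi, normM, tauPart_piM_graphQuot]
  simp only [vPart_piM, etaPart_piM, wPart_piM, xPart_hMul, yPart_hMul, xPart_hInv, yPart_hInv,
    yPart_graphMap_of_lt, xPart_graphMap_add, yPart_graphMap_add,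
    neg_add_eq_sub, horDist]

lemma dPhi_nonneg : 0 ≤ dPhi hk φ a b :=
  le_max_of_le_left (Real.sqrt_nonneg _)

end graphQuot

lemma rhoPhi_eq (φ : MP n k → EuclideanSpace ℝ (Fin k)) (a b : MP n k) :
    rhoPhi φ a b = max (horDist a b) (Real.sqrt |graphVert φ a b +
      (1 / 2) * ∑ i, (φ a i - φ b i) * (etaPart b i - etaPart a i)|) := by
  rw [rhoPhi, horDist, graphVert]
  congr 3
  simp only [add_mul, sub_mul, Finset.sum_add_distrib, Finset.sum_sub_distrib]
  ring

lemma abs_sum_mul_etaPart_sub_le (x : EuclideanSpace ℝ (Fin k)) (a b : MP n k) :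
    |∑ i, x i * (etaPart b i - etaPart a i)| ≤ ‖x‖ * horDist a b := by
  have hx : ‖x‖ = Real.sqrt (∑ i, x i ^ 2) := by simp [EuclideanSpace.norm_eq]
  calc |∑ i, x i * (etaPart b i - etaPart a i)|
      ≤ Real.sqrt (∑ i, x i ^ 2) * Real.sqrt (∑ i, (etaPart a i - etaPart b i) ^ 2) := by
        rw [← Real.sqrt_mul (Finset.sum_nonneg fun i _ => sq_nonneg _)]
        refine Real.abs_le_sqrt ((Finset.sum_mul_sq_le_sq_mul_sq _ _ _).trans_eq ?_)
        simp_rw [← neg_sub (etaPart a _), neg_sq]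
    _ ≤ ‖x‖ * horDist a b := by
        rw [hx, horDist]
        gcongr
        exact le_add_of_le_of_nonneg
          (le_add_of_nonneg_left (Finset.sum_nonneg fun _ _ => sq_nonneg _))
          (Finset.sum_nonneg fun _ _ => sq_nonneg _)

lemma rhoPhi_le_sqrt (hk : k ≤ n) (φ : MP n k → EuclideanSpace ℝ (Fin k)) (a b : MP n k) :
    rhoPhi φ a b ≤
      Real.sqrt (dPhi hk φ a b ^ 2 + ‖φ a - φ b‖ * dPhi hk φ a b / 2) := by
  set d := dPhi hk φ a b
  have hd : 0 ≤ d := dPhi_nonneg hk φ a b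
  have hhor : horDist a b ≤ d := (le_max_left _ _).trans_eq (dPhi_eq hk φ a b).symm
  have hvert : |graphVert φ a b| ≤ d ^ 2 :=
    (Real.sqrt_le_left hd).1 ((le_max_right _ _).trans_eq (dPhi_eq hk φ a b).symm)
  have hcross := abs_sum_mul_etaPart_sub_le (φ a - φ b) a b
  simp only [PiLp.sub_apply] at hcross
  rw [rhoPhi_eq]
  refine max_le ?_ (Real.sqrt_le_sqrt ?_)
  · exact hhor.trans (Real.le_sqrt_of_sq_le (le_add_of_nonneg_right (by positivity)))
  · refine (abs_add_le _ _).trans ?_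
    rw [abs_mul, abs_of_pos (by norm_num : (0 : ℝ) < 1 / 2)]
    have := mul_le_mul_of_nonneg_left hhor (norm_nonneg (φ a - φ b))
    linarith

-- `(c + c²/2)·d` dominates the positive root of `Δ² - (c²d/2)·Δ - c²d²`.
lemma le_of_le_mul_sqrt_sq_add {Δ c d : ℝ} (hc : 0 ≤ c) (hd : 0 ≤ d)
    (h : Δ ≤ c * Real.sqrt (d ^ 2 + Δ * d / 2)) : Δ ≤ (c + c ^ 2 / 2) * d := by
  rcases le_or_gt Δ 0 with hΔ | hΔ
  · exact hΔ.trans (by positivity)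
  have hsq : Δ ^ 2 ≤ c ^ 2 * (d ^ 2 + Δ * d / 2) := by
    calc Δ ^ 2 ≤ (c * Real.sqrt (d ^ 2 + Δ * d / 2)) ^ 2 := pow_le_pow_left₀ hΔ.le h 2
      _ = c ^ 2 * (d ^ 2 + Δ * d / 2) := by rw [mul_pow, Real.sq_sqrt (by positivity)]
  nlinarith [mul_nonneg (pow_nonneg hc 3) (sq_nonneg d), mul_nonneg hc hd]

theorem statement11_general (n k : ℕ) (hk1 : 1 ≤ k) (hk : k ≤ n)
    (Ω : Set (MP n k))
    (φ : MP n k → EuclideanSpace ℝ (Fin k))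
    (c : ℝ) (hc : 0 < c)
    (hbound : ∀ a ∈ Ω, ∀ b ∈ Ω, ‖φ a - φ b‖ ≤ c * rhoPhi φ a b) :
    ∀ a ∈ Ω, ∀ b ∈ Ω,
      ‖φ a - φ b‖ ≤ 2 * (c + (k : ℝ) ^ 2 * c ^ 2 / 4) * dPhi hk φ a b := by
  intro a ha b hb
  have hk_sq : (1 : ℝ) ≤ (k : ℝ) ^ 2 := one_le_pow₀ (by exact_mod_cast hk1)
  calc ‖φ a - φ b‖ ≤ (c + c ^ 2 / 2) * dPhi hk φ a b :=
        le_of_le_mul_sqrt_sq_add hc.le (dPhi_nonneg hk φ a b)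
          ((hbound a ha b hb).trans (mul_le_mul_of_nonneg_left (rhoPhi_le_sqrt hk φ a b) hc.le))
    _ ≤ 2 * (c + (k : ℝ) ^ 2 * c ^ 2 / 4) * dPhi hk φ a b :=
        mul_le_mul_of_nonneg_right (by nlinarith [mul_le_mul_of_nonneg_right hk_sq (sq_nonneg c)])
          (dPhi_nonneg hk φ a b)

/-- Proposition 5.5: if `|φ(a) - φ(b)| ≤ c·ρ_φ(a,b)` on `Ω`, then
`φ` is intrinsic Lipschitz, with `|φ(a) - φ(b)| ≤ 2(c + k²c²/4)·d_φ(a,b)`. -/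
theorem statement11 (n k : ℕ) (hn : 1 ≤ n) (hk1 : 1 ≤ k) (hk : k ≤ n)
    (Ω : Set (MP n k)) (hΩ : IsOpen Ω)
    (φ : MP n k → EuclideanSpace ℝ (Fin k)) (hφ : ContinuousOn φ Ω)
    (c : ℝ) (hc : 0 < c)
    (hbound : ∀ a ∈ Ω, ∀ b ∈ Ω, ‖φ a - φ b‖ ≤ c * rhoPhi φ a b) :
    ∀ a ∈ Ω, ∀ b ∈ Ω,
      ‖φ a - φ b‖ ≤ 2 * (c + (k : ℝ) ^ 2 * c ^ 2 / 4) * dPhi hk φ a b :=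
  statement11_general n k hk1 hk Ω φ c hc hbound

end HeisGraph
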